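/- arXiv:2004.01882 — 2 statements merged into one kernel-verified Lean document; each statement's English description precedes it below -/
import Mathlib

section
/- If h : ℝⁿ → ℝ is continuously differentiable and x : [0,∞) → ℝⁿ is a solution of the ODE x' = b(x) such that for all t, d/dt h(x(t)) ≥ -α(h(x(t))) for some locally Lipschitz extended class-K function α (strictly increasing, α(0)=0), and h(x(0)) ≥ 0, then h(x(t)) ≥ 0 for all t ≥ 0. -/
/-!
If `h ∘ x` became negative at some time `t`, take the last time `t₀ ≤ t` at which it is
nonnegative. On `(t₀, t]` the value is negative, so `α` of it is negative and the barrier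
inequality makes the derivative positive; hence `h ∘ x` increases on `[t₀, t]` and cannot
drop from a nonnegative value to a negative one.
-/

open Set

-- No differentiability hypothesis is needed: `0 < deriv f s` already forces it, as `deriv` is `0`
-- where `f` is not differentiable.
theorem nonneg_of_deriv_pos_of_neg {f : ℝ → ℝ} {a b : ℝ} (hab : a ≤ b)
    (hf : ContinuousOn f (Icc a b)) (ha : 0 ≤ f a)
    (hderiv : ∀ s ∈ Ioo a b, f s < 0 → 0 < deriv f s) : 0 ≤ f b := by
  by_contra! hb
  set S : Set ℝ := Icc a b ∩ f ⁻¹' Ici 0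
  have hSbdd : BddAbove S := bddAbove_Icc.mono inter_subset_left
  have ht₀ : sSup S ∈ S :=
    (hf.preimage_isClosed_of_isClosed isClosed_Icc isClosed_Ici).csSup_mem
      ⟨a, ⟨le_rfl, hab⟩, ha⟩ hSbdd
  set t₀ := sSup S
  have hneg_after : ∀ s ∈ Ioc t₀ b, f s < 0 := fun s ⟨hts, hsb⟩ => by
    by_contra! hs
    exact (le_csSup hSbdd ⟨⟨ht₀.1.1.trans hts.le, hsb⟩, hs⟩).not_gt hts
  have ht₀b : t₀ < b := ht₀.1.2.lt_of_ne fun h => hb.not_ge (h ▸ ht₀.2)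
  have hmono : StrictMonoOn f (Icc t₀ b) := by
    refine strictMonoOn_of_deriv_pos (convex_Icc t₀ b)
      (hf.mono (Icc_subset_Icc ht₀.1.1 le_rfl)) fun s hs => ?_
    rw [interior_Icc] at hs
    exact hderiv s ⟨ht₀.1.1.trans_lt hs.1, hs.2⟩ (hneg_after s ⟨hs.1, hs.2.le⟩)
  have hft₀ : 0 ≤ f t₀ := ht₀.2
  linarith [hmono (left_mem_Icc.mpr ht₀b.le) (right_mem_Icc.mpr ht₀b.le) ht₀b]

theorem stmt0_general {n : ℕ} (h : (Fin n → ℝ) → ℝ) (b : (Fin n → ℝ) → Fin n → ℝ)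
    (x : ℝ → Fin n → ℝ) (α : ℝ → ℝ)
    (hh : ContDiff ℝ 1 h)
    (hαmono : StrictMono α) (hα0 : α 0 = 0)
    (hode : ∀ t ≥ (0:ℝ), HasDerivAt x (b (x t)) t)
    (hineq : ∀ t ≥ (0:ℝ), deriv (fun s => h (x s)) t ≥ -α (h (x t)))
    (h0 : h (x 0) ≥ 0) :
    ∀ t ≥ (0:ℝ), h (x t) ≥ 0 := by
  intro t ht
  have hdiff : ∀ s ≥ (0:ℝ), DifferentiableAt ℝ (fun s => h (x s)) s := fun s hs =>
    (hh.differentiable one_ne_zero (x s)).comp s (hode s hs).differentiableAt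
  refine nonneg_of_deriv_pos_of_neg ht
    (fun s hs => (hdiff s hs.1).continuousAt.continuousWithinAt) h0 fun s hs hneg => ?_
  have hα_neg : α (h (x s)) < 0 := hα0 ▸ hαmono hneg
  linarith [hineq s hs.1.le]

/-- Deterministic zeroing barrier function invariance: if `h` is C¹, `x` solves
`x' = b x`, `d/dt h(x t) ≥ -α (h (x t))` for a locally Lipschitz extended
class-K function `α`, and `h (x 0) ≥ 0`, then `h (x t) ≥ 0` for all `t ≥ 0`. -/
theorem stmt0 {n : ℕ} (h : (Fin n → ℝ) → ℝ) (b : (Fin n → ℝ) → Fin n → ℝ)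
    (x : ℝ → Fin n → ℝ) (α : ℝ → ℝ)
    (hh : ContDiff ℝ 1 h)
    (hαlip : LocallyLipschitz α) (hαmono : StrictMono α) (hα0 : α 0 = 0)
    (hode : ∀ t ≥ (0:ℝ), HasDerivAt x (b (x t)) t)
    (hineq : ∀ t ≥ (0:ℝ), deriv (fun s => h (x s)) t ≥ -α (h (x t)))
    (h0 : h (x 0) ≥ 0) :
    ∀ t ≥ (0:ℝ), h (x t) ≥ 0 :=
  stmt0_general h b x α hh hαmono hα0 hode hineq h0
end

section
/- Let α be an extended class-K function that is locally Lipschitz, and y : [0,∞) → ℝ differentiable with y' ≥ -α(y) and y(0) > 0. Then y(t) > 0 for all t ≥ 0, i.e., trajectories starting strictly inside the safe set {y ≥ 0} remain strictly inside for all time. -/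
/-!
Near `0` the Lipschitz bound gives `α z ≤ K z`, so while `y` is small and positive it satisfies
`y' ≥ -K y`. The exponential `c e^{-(K+1)t}`, with `c = min (y 0) δ`, decays strictly faster,
so `y` can never touch it from above; it therefore stays above a positive function.
-/

open Set

theorem LocallyLipschitz.exists_le_mul_of_map_zero {f : ℝ → ℝ} (hf : LocallyLipschitz f)
    (h0 : f 0 = 0) : ∃ K δ : ℝ, 0 ≤ K ∧ 0 < δ ∧ ∀ z ∈ Icc 0 δ, f z ≤ K * z := by
  obtain ⟨K, U, hU, hlip⟩ := hf 0
  obtain ⟨δ, hδ, hδU⟩ := Metric.nhds_basis_closedBall.mem_iff.1 hU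
  refine ⟨K, δ, K.coe_nonneg, hδ, fun z ⟨hz0, hzδ⟩ => ?_⟩
  have hzU : z ∈ U := hδU (by simp [Metric.mem_closedBall, abs_of_nonneg hz0, hzδ])
  have h := hlip.dist_le_mul z hzU 0 (hδU (Metric.mem_closedBall_self hδ.le))
  rw [Real.dist_eq, Real.dist_eq, h0, sub_zero, sub_zero, abs_of_nonneg hz0] at h
  exact (le_abs_self _).trans h

theorem pos_of_hasDerivAt_ge_neg_mul_near_zero {y y' : ℝ → ℝ} {K δ : ℝ} (hK : 0 ≤ K)
    (hδ : 0 < δ) (hy : ∀ t ≥ (0:ℝ), HasDerivAt y (y' t) t)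
    (hbound : ∀ t ≥ (0:ℝ), y t ∈ Ioc 0 δ → -K * y t ≤ y' t) (h0 : 0 < y 0) :
    ∀ t ≥ (0:ℝ), 0 < y t := by
  intro t ht
  set c := min (y 0) δ
  have hc : 0 < c := lt_min h0 hδ
  set B : ℝ → ℝ := fun s => c * Real.exp (-(K + 1) * s)
  have hB : ∀ s, HasDerivAt B (-(K + 1) * B s) s := fun s => by
    have := (((hasDerivAt_id s).const_mul (-(K + 1))).exp).const_mul c
    simp only [id, mul_one] at this
    exact this.congr_deriv (by simp only [B]; ring)
  have hB_pos : ∀ s, 0 < B s := fun s => mul_pos hc (Real.exp_pos _)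
  have hB_le : ∀ s ≥ (0:ℝ), B s ≤ δ := fun s hs =>
    calc B s ≤ c * 1 := by
          simp only [B]
          gcongr
          exact Real.exp_le_one_iff.2 (by nlinarith)
      _ ≤ δ := by simp [c]
  have hBy : B t ≤ y t := by
    refine image_le_of_deriv_right_lt_deriv_boundary'
      (fun s _ => (hB s).continuousAt.continuousWithinAt) (fun s _ => (hB s).hasDerivWithinAt)
      (by simp [B, c]) (fun s hs => (hy s hs.1).continuousAt.continuousWithinAt)
      (fun s hs => (hy s hs.1).hasDerivWithinAt) (fun s hs hBs => ?_) ⟨ht, le_rfl⟩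
    have hy' := hbound s hs.1 (hBs ▸ ⟨hB_pos s, hB_le s hs.1⟩)
    rw [← hBs] at hy'
    linarith [hB_pos s]
  exact (hB_pos t).trans_le hBy

theorem stmt16_general (α : ℝ → ℝ) (y y' : ℝ → ℝ)
    (hα0 : α 0 = 0)
    (hαlip : LocallyLipschitz α)
    (hy : ∀ t ≥ (0:ℝ), HasDerivAt y (y' t) t)
    (hineq : ∀ t ≥ (0:ℝ), y' t ≥ -α (y t))
    (h0 : y 0 > 0) :
    ∀ t ≥ (0:ℝ), y t > 0 := by
  obtain ⟨K, δ, hK, hδ, hαK⟩ := hαlip.exists_le_mul_of_map_zero hα0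
  refine pos_of_hasDerivAt_ge_neg_mul_near_zero hK hδ hy (fun t ht hyt => ?_) h0
  have := hαK (y t) (Ioc_subset_Icc_self hyt)
  linarith [hineq t ht]

/-- Strict barrier invariance: for `α` an extended class-K (continuous, strictly
increasing, `α 0 = 0`) locally Lipschitz function and `y` differentiable with
`y' ≥ -α (y)` and `y 0 > 0`, trajectories remain strictly positive for all `t ≥ 0`. -/
theorem stmt16 (α : ℝ → ℝ) (y y' : ℝ → ℝ)
    (hαcont : Continuous α) (hαmono : StrictMono α) (hα0 : α 0 = 0)
    (hαlip : LocallyLipschitz α)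
    (hy : ∀ t ≥ (0:ℝ), HasDerivAt y (y' t) t)
    (hineq : ∀ t ≥ (0:ℝ), y' t ≥ -α (y t))
    (h0 : y 0 > 0) :
    ∀ t ≥ (0:ℝ), y t > 0 :=
  stmt16_general α y y' hα0 hαlip hy hineq h0
end
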